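/- arXiv:2403.02501 — 3 statements merged into one kernel-verified Lean document; each statement's English description precedes it below -/
import Mathlib

section
/- Suppose w : [0,∞)×T² → ℝ is positive and satisfies the comparison bounds w̄[C₋,η₋](t) ≤ w(t,θ) ≤ w̄[C₊,η₊](t), where w̄[C,η](t) = (1 + Ce^{-2∫₀^t η})^{-1/2} and η₊(t), η₋(t) = 3/2 + O(e^{-2t}). Then |w(t,θ) - 1| ≤ C₀ e^{-3t} for some constant C₀ and all t ≥ 0. -/
/-!
If `η = μ/2 + O(e^{-2t})` then `∫₀^t η ≥ μt/2 - A/2`, so `u = e^{-2∫₀^t η} = O(e^{-μt})`.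
The barrier is `y^{-1/2}` with `y = 1 + C u`, and `y ≥ δ > 0` on `[0, ∞)`: by compactness on an
initial interval and because `u → 0` beyond it. On `[δ, ∞)` the map `y ↦ y^{-1/2}` is Lipschitz
at `1`, so both barriers are `1 + O(e^{-μt})`, and `w` is squeezed between them.
-/

open Real

/-- The barrier `w̄[C,η](t) = (1 + C e^{-2∫₀^t η})^{-1/2}`. -/
noncomputable def barrier (C : ℝ) (η : ℝ → ℝ) (t : ℝ) : ℝ :=
  (1 + C * Real.exp (-2 * ∫ s in (0:ℝ)..t, η s)) ^ (-(1/2) : ℝ)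

open Set Filter Topology

lemma integral_exp_neg_two_mul (t : ℝ) :
    ∫ s in (0:ℝ)..t, exp (-2 * s) = (1 - exp (-2 * t)) / 2 := by
  rw [intervalIntegral.integral_comp_mul_left (fun s => exp s) (by norm_num : (-2:ℝ) ≠ 0),
    integral_exp]
  simp only [mul_zero, exp_zero, smul_eq_mul]
  ring

lemma le_integral_of_sub_mul_exp_le {η : ℝ → ℝ} (hη : Continuous η) {l A t : ℝ} (hA : 0 ≤ A)
    (h : ∀ s ≥ 0, l - A * exp (-2 * s) ≤ η s) (ht : 0 ≤ t) :
    l * t - A / 2 ≤ ∫ s in (0:ℝ)..t, η s := by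
  have hexp : Continuous fun s : ℝ => A * exp (-2 * s) := by fun_prop
  have hmono : ∫ s in (0:ℝ)..t, (l - A * exp (-2 * s)) ≤ ∫ s in (0:ℝ)..t, η s :=
    intervalIntegral.integral_mono_on ht
      ((continuous_const.sub hexp).intervalIntegrable _ _) (hη.intervalIntegrable _ _)
      fun s hs => h s hs.1
  rw [intervalIntegral.integral_sub intervalIntegrable_const (hexp.intervalIntegrable _ _),
    intervalIntegral.integral_const, intervalIntegral.integral_const_mul,
    integral_exp_neg_two_mul] at hmono
  simp only [sub_zero, smul_eq_mul] at hmono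
  nlinarith [exp_pos (-2 * t)]

lemma exists_pos_le_of_continuousOn_Ici {g : ℝ → ℝ} {a c : ℝ} (hg : ContinuousOn g (Ici a))
    (hpos : ∀ t ≥ a, 0 < g t) (hc : 0 < c) (hev : ∀ᶠ t in atTop, c ≤ g t) :
    ∃ δ > 0, ∀ t ≥ a, δ ≤ g t := by
  obtain ⟨T, hT⟩ := eventually_atTop.mp hev
  obtain ⟨x₀, hx₀, hmin⟩ := isCompact_Icc.exists_isMinOn
    (nonempty_Icc.mpr (le_max_left a T)) (hg.mono Icc_subset_Ici_self)
  refine ⟨min (g x₀) c, lt_min (hpos x₀ hx₀.1) hc, fun t ht => ?_⟩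
  rcases le_or_gt t (max a T) with htT | hTt
  · exact (min_le_left _ _).trans (hmin ⟨ht, htT⟩)
  · exact (min_le_right _ _).trans (hT t (le_of_max_le_right hTt.le))

lemma abs_rpow_neg_half_sub_one_le {δ y : ℝ} (hδ : 0 < δ) (hy : δ ≤ y) :
    |y ^ (-(1/2) : ℝ) - 1| ≤ |y - 1| / √δ := by
  have hy0 : 0 < y := hδ.trans_le hy
  have hs : 0 < √y := sqrt_pos.mpr hy0
  have hsq : |y - 1| = |√y - 1| * (√y + 1) := by
    rw [← abs_of_pos (by positivity : 0 < √y + 1), ← abs_mul]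
    congr 1
    nlinarith [sq_sqrt hy0.le]
  rw [rpow_neg hy0.le, ← sqrt_eq_rpow, hsq,
    show (√y)⁻¹ - 1 = -((√y - 1) / √y) by field_simp; ring,
    abs_neg, abs_div, abs_of_pos hs]
  calc |√y - 1| / √y ≤ |√y - 1| / √δ := by gcongr
    _ ≤ |√y - 1| * (√y + 1) / √δ := by
      gcongr; exact le_mul_of_one_le_right (abs_nonneg _) (by linarith)

theorem exists_abs_barrier_sub_one_le {C μ A : ℝ} {η : ℝ → ℝ} (hη : Continuous η)
    (hμ : 0 < μ) (hA : ∀ t ≥ (0:ℝ), |η t - μ / 2| ≤ A * exp (-2 * t))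
    (hpos : ∀ t ≥ (0:ℝ), 0 < 1 + C * exp (-2 * ∫ s in (0:ℝ)..t, η s)) :
    ∃ K : ℝ, ∀ t ≥ (0:ℝ), |barrier C η t - 1| ≤ K * exp (-μ * t) := by
  have hA0 : 0 ≤ A := by simpa using (abs_nonneg _).trans (hA 0 le_rfl)
  set g : ℝ → ℝ := fun t => 1 + C * exp (-2 * ∫ s in (0:ℝ)..t, η s)
  have hg_sub : ∀ t ≥ (0:ℝ), |g t - 1| ≤ |C| * exp A * exp (-μ * t) := by
    intro t ht
    have hint := le_integral_of_sub_mul_exp_le (l := μ / 2) hη hA0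
      (fun s hs => by linarith [(abs_le.mp (hA s hs)).1]) ht
    rw [show g t - 1 = C * exp (-2 * ∫ s in (0:ℝ)..t, η s) by ring, abs_mul,
      abs_of_pos (exp_pos _), mul_assoc, ← exp_add]
    gcongr
    linarith
  have hdecay : Tendsto (fun t => |C| * exp A * exp (-μ * t)) atTop (𝓝 0) := by
    have := tendsto_exp_atBot.comp (tendsto_id.const_mul_atTop_of_neg (neg_neg_of_pos hμ))
    simpa using this.const_mul (|C| * exp A)
  have hev : ∀ᶠ t in atTop, 1 / 2 ≤ g t := by
    filter_upwards [hdecay.eventually (ge_mem_nhds (by norm_num : (0:ℝ) < 1 / 2)),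
      eventually_ge_atTop 0] with t hsmall ht
    linarith [(abs_le.mp ((hg_sub t ht).trans hsmall)).1]
  have hg : Continuous g := by
    have := intervalIntegral.continuous_primitive
      (μ := MeasureTheory.volume) (fun a b => hη.intervalIntegrable a b) 0
    fun_prop
  obtain ⟨δ, hδ, hδg⟩ :=
    exists_pos_le_of_continuousOn_Ici hg.continuousOn hpos (by norm_num) hev
  refine ⟨|C| * exp A / √δ, fun t ht => ?_⟩
  calc |barrier C η t - 1| ≤ |g t - 1| / √δ := abs_rpow_neg_half_sub_one_le hδ (hδg t ht)
    _ ≤ |C| * exp A * exp (-μ * t) / √δ := by gcongr; exact hg_sub t ht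
    _ = |C| * exp A / √δ * exp (-μ * t) := by ring

theorem barrier_squeeze_decay_general
    (w : ℝ → EuclideanSpace ℝ (Fin 2) → ℝ)
    (Cm Cp : ℝ) (ηm ηp : ℝ → ℝ)
    (hηmc : Continuous ηm) (hηpc : Continuous ηp)
    (hasymp : ∃ A : ℝ, ∀ t ≥ (0:ℝ),
      |ηp t - 3/2| ≤ A * Real.exp (-2 * t) ∧ |ηm t - 3/2| ≤ A * Real.exp (-2 * t))
    (hposm : ∀ t, 0 < 1 + Cm * Real.exp (-2 * ∫ s in (0:ℝ)..t, ηm s))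
    (hposp : ∀ t, 0 < 1 + Cp * Real.exp (-2 * ∫ s in (0:ℝ)..t, ηp s))
    (hsqueeze : ∀ t ≥ (0:ℝ), ∀ x, barrier Cm ηm t ≤ w t x ∧ w t x ≤ barrier Cp ηp t) :
    ∃ C₀ : ℝ, ∀ t ≥ (0:ℝ), ∀ x, |w t x - 1| ≤ C₀ * Real.exp (-3 * t) := by
  obtain ⟨A, hA⟩ := hasymp
  obtain ⟨Km, hKm⟩ := exists_abs_barrier_sub_one_le hηmc three_pos (fun t ht => (hA t ht).2)
    fun t _ => hposm t
  obtain ⟨Kp, hKp⟩ := exists_abs_barrier_sub_one_le hηpc three_pos (fun t ht => (hA t ht).1)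
    fun t _ => hposp t
  refine ⟨max Km Kp, fun t ht x => ?_⟩
  obtain ⟨hlow, hup⟩ := hsqueeze t ht x
  calc |w t x - 1| ≤ max |barrier Cm ηm t - 1| |barrier Cp ηp t - 1| :=
        abs_le_max_abs_abs (by linarith) (by linarith)
    _ ≤ max (Km * exp (-3 * t)) (Kp * exp (-3 * t)) := max_le_max (hKm t ht) (hKp t ht)
    _ = max Km Kp * exp (-3 * t) := (max_mul_of_nonneg _ _ (exp_pos _).le).symm

/-- if a positive function `w` on `[0,∞)×T²` is squeezed between the
barriers `w̄[C₋,η₋]` and `w̄[C₊,η₊]` with `η₊, η₋ = 3/2 + O(e^{-2t})`, then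
`|w - 1| ≤ C₀ e^{-3t}`. -/
theorem barrier_squeeze_decay
    (w : ℝ → EuclideanSpace ℝ (Fin 2) → ℝ)
    (Cm Cp : ℝ) (ηm ηp : ℝ → ℝ)
    (hηmc : Continuous ηm) (hηpc : Continuous ηp)
    (hasymp : ∃ A : ℝ, ∀ t ≥ (0:ℝ),
      |ηp t - 3/2| ≤ A * Real.exp (-2 * t) ∧ |ηm t - 3/2| ≤ A * Real.exp (-2 * t))
    (hposm : ∀ t, 0 < 1 + Cm * Real.exp (-2 * ∫ s in (0:ℝ)..t, ηm s))
    (hposp : ∀ t, 0 < 1 + Cp * Real.exp (-2 * ∫ s in (0:ℝ)..t, ηp s))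
    (hwpos : ∀ t x, 0 < w t x)
    (hsqueeze : ∀ t ≥ (0:ℝ), ∀ x, barrier Cm ηm t ≤ w t x ∧ w t x ≤ barrier Cp ηp t) :
    ∃ C₀ : ℝ, ∀ t ≥ (0:ℝ), ∀ x, |w t x - 1| ≤ C₀ * Real.exp (-3 * t) :=
  barrier_squeeze_decay_general w Cm Cp ηm ηp hηmc hηpc hasymp hposm hposp hsqueeze
end

section
/- Let f : [0,∞) → ℝ≥0 be differentiable and satisfy f'(t) ≤ (-2(m+2) + C e^{-2t}) f(t) + C e^{-2(m+4)t} √f(t) for constants C > 0 and integer m ≥ 0. Then f(t) ≤ C_m e^{-2(m+2)t} for a constant C_m depending only on C, m, and f(0). -/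
/-!
With `A = 2(m+2)`, the function `g = f e^{At}` satisfies `g' ≤ C e^{-2t} g + C e^{-4t} √f`, and since
`√f ≤ f + 1 ≤ g + 1` this gives `(g + 1)' ≤ 2C e^{-2t} (g + 1)`. The coefficient `2C e^{-2t}` is integrable
on `[0, ∞)`, with primitive `-C e^{-2t}`, so the Grönwall quantity `(g + 1) exp (C e^{-2t})` is
nonincreasing. Hence `g(t) ≤ (f(0) + 1) e^C` for all `t ≥ 0`.
-/

open Real Set

theorem Real.sqrt_le_add_one {x : ℝ} (hx : 0 ≤ x) : √x ≤ x + 1 := by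
  nlinarith [sq_sqrt hx, sqrt_nonneg x]

theorem antitoneOn_mul_exp_of_deriv_le {u B β : ℝ → ℝ} {a : ℝ} (hu : Differentiable ℝ u)
    (hB : ∀ t, HasDerivAt B (-β t) t) (h : ∀ t > a, deriv u t ≤ β t * u t) :
    AntitoneOn (fun t => u t * exp (B t)) (Ici a) := by
  have hderiv : ∀ t, HasDerivAt (fun t => u t * exp (B t))
      (exp (B t) * (deriv u t - β t * u t)) t := fun t =>
    ((hu t).hasDerivAt.mul (hB t).exp).congr_deriv (by ring)
  refine antitoneOn_of_deriv_nonpos (convex_Ici a)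
    (fun t _ => (hderiv t).continuousAt.continuousWithinAt)
    (fun t _ => (hderiv t).differentiableAt.differentiableWithinAt) fun t ht => ?_
  rw [interior_Ici] at ht
  rw [(hderiv t).deriv]
  exact mul_nonpos_of_nonneg_of_nonpos (exp_pos _).le (sub_nonpos.2 (h t ht))

theorem hasDerivAt_const_mul_exp_neg_two_mul (c t : ℝ) :
    HasDerivAt (fun s => c * exp (-2 * s)) (-(2 * c * exp (-2 * t))) t :=
  (((hasDerivAt_id' t).const_mul (-2)).exp.const_mul c).congr_deriv (by ring)

theorem deriv_mul_exp_add_one_le {f : ℝ → ℝ} {A c t : ℝ} (hA : 0 ≤ A) (hc : 0 ≤ c)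
    (ht : 0 ≤ t) (hf : 0 ≤ f t) (hd : DifferentiableAt ℝ f t)
    (h : deriv f t ≤ (-A + c * exp (-2 * t)) * f t + c * exp (-(A + 2) * t) * √(f t)) :
    deriv (fun s => f s * exp (A * s) + 1) t ≤
      2 * c * exp (-2 * t) * (f t * exp (A * t) + 1) := by
  have hderiv : HasDerivAt (fun s => f s * exp (A * s) + 1)
      ((deriv f t + A * f t) * exp (A * t)) t :=
    ((hd.hasDerivAt.mul ((hasDerivAt_id' t).const_mul A).exp).add_const 1).congr_deriv
      (by ring)
  have hweight : exp (-(A + 2) * t) * exp (A * t) = exp (-2 * t) := by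
    rw [← exp_add]; ring_nf
  have hsqrt : √(f t) ≤ f t * exp (A * t) + 1 :=
    (sqrt_le_add_one hf).trans
      (by gcongr; exact le_mul_of_one_le_right hf (one_le_exp (by positivity)))
  have he : 0 ≤ c * exp (-2 * t) := by positivity
  rw [hderiv.deriv]
  calc (deriv f t + A * f t) * exp (A * t)
      ≤ (c * exp (-2 * t) * f t + c * exp (-(A + 2) * t) * √(f t)) * exp (A * t) :=
        mul_le_mul_of_nonneg_right (by linarith) (exp_pos _).le
    _ = c * exp (-2 * t) * (f t * exp (A * t)) + c * exp (-2 * t) * √(f t) := by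
        rw [← hweight]; ring
    _ ≤ 2 * c * exp (-2 * t) * (f t * exp (A * t) + 1) := by
        nlinarith [mul_le_mul_of_nonneg_left hsqrt he]

/-- if a nonnegative differentiable `f` satisfies
`f' ≤ (-2(m+2) + Ce^{-2t}) f + C e^{-2(m+4)t} √f` on `[0,∞)`, then
`f(t) ≤ C_m e^{-2(m+2)t}` for a constant depending only on `C`, `m`, `f(0)`. -/
theorem ode_inequality_decay (f : ℝ → ℝ) (C : ℝ) (m : ℕ)
    (hC : 0 < C)
    (hnn : ∀ t, 0 ≤ f t)
    (hdiff : Differentiable ℝ f)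
    (hineq : ∀ t ≥ (0:ℝ), deriv f t ≤
      (-2 * ((m : ℝ) + 2) + C * Real.exp (-2 * t)) * f t
        + C * Real.exp (-2 * ((m : ℝ) + 4) * t) * Real.sqrt (f t)) :
    ∃ Cm : ℝ, ∀ t ≥ (0:ℝ), f t ≤ Cm * Real.exp (-2 * ((m : ℝ) + 2) * t) := by
  set A : ℝ := 2 * ((m : ℝ) + 2)
  have hineq' : ∀ t ≥ (0 : ℝ), deriv f t ≤
      (-A + C * exp (-2 * t)) * f t + C * exp (-(A + 2) * t) * √(f t) := fun t ht => by
    have hweight : exp (-2 * ((m : ℝ) + 4) * t) ≤ exp (-(A + 2) * t) :=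
      exp_le_exp.2 (by nlinarith)
    nlinarith [hineq t ht, mul_le_mul_of_nonneg_left hweight hC.le, sqrt_nonneg (f t)]
  have hanti := antitoneOn_mul_exp_of_deriv_le (a := 0)
    (u := fun s => f s * exp (A * s) + 1) (by fun_prop)
    (hasDerivAt_const_mul_exp_neg_two_mul C) fun t ht =>
      deriv_mul_exp_add_one_le (by positivity) hC.le ht.le (hnn t) (hdiff t) (hineq' t ht.le)
  refine ⟨(f 0 + 1) * exp C, fun t ht => ?_⟩
  have hbound := hanti self_mem_Ici ht ht
  simp only [mul_zero, exp_zero, mul_one] at hbound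
  rw [show -2 * ((m : ℝ) + 2) * t = -(A * t) by ring, exp_neg, le_mul_inv_iff₀ (exp_pos _)]
  have hg : 0 ≤ f t * exp (A * t) + 1 := by have := hnn t; positivity
  linarith [le_mul_of_one_le_right hg (one_le_exp (by positivity : 0 ≤ C * exp (-2 * t)))]
end

section
/- Let H_t, H_+, V be functions on the leaf Σ_t of the normal flow with asymptotics H_+ = w^{-1}H_t, H_t = 2 + O(e^{-2t}), V = e^s, e^{3s}(w-1) = w_∞ + o(1), and area element dA_{γ_t} = e^{2s}(1+O(e^{-2s}))dA_σ, where s = t + f(θ) + O(e^{-2t}). Then lim_{t→∞} ∫_{Σ_t} V(H_t - H_+) dA_{γ_t} = ∫_{T²} 2 w_∞ dA_σ. -/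
/-!
Write the integrand as `q · g` with `g = e^{3s}(w - 1)`, which tends to `w_∞` uniformly, and
`q = H w⁻¹ (e^{-2s} a)`. Since `s = t + O(1)` uniformly, `H → 2` and `e^{-2s} a → 1` uniformly,
and `w → 1` pointwise. The uniform limit `w_∞` is bounded below (because `w > 0` forces
`g > -e^{3s}`), so `w ≥ 1/2` eventually and `q` is eventually bounded. Dominated convergence
with dominating function `K (|w_∞| + 1)` then gives `∫ q g → ∫ 2 w_∞`.
-/

open Filter MeasureTheory Topology Set Real

lemma exp_mul_sub_inv_mul_mul_eq {s H w a : ℝ} (hw : w ≠ 0) :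
    exp s * (H - w⁻¹ * H) * a = H * w⁻¹ * (exp (-2 * s) * a) * (exp (3 * s) * (w - 1)) := by
  have hexp : exp (-2 * s) * exp (3 * s) = exp s := by rw [← exp_add]; ring_nf
  rw [← hexp]
  field_simp

section UniformLimits

variable {ι α : Type*} {l : Filter ι} {F : ι → α → ℝ} {φ : α → ℝ}

lemma TendstoUniformly.eventually_forall_abs_lt_abs_add (h : TendstoUniformly F φ l) {ε : ℝ}
    (hε : 0 < ε) : ∀ᶠ i in l, ∀ x, |F i x| < |φ x| + ε := by
  filter_upwards [Metric.tendstoUniformly_iff.mp h ε hε] with i hi x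
  have hdist := hi x
  rw [dist_comm, Real.dist_eq] at hdist
  linarith [abs_sub_abs_le_abs_sub (F i x) (φ x)]

lemma TendstoUniformly.exists_eventually_forall_le [l.NeBot] (h : TendstoUniformly F φ l)
    (hF : ∀ᶠ i in l, BddBelow (range (F i))) : ∃ B, ∀ᶠ i in l, ∀ x, B ≤ F i x := by
  have hclose := Metric.tendstoUniformly_iff.mp h 1 one_pos
  obtain ⟨i₀, hi₀, ⟨B, hB⟩⟩ := (hclose.and hF).exists
  have hφ : ∀ x, B - 1 ≤ φ x := fun x => by
    have := hi₀ x
    rw [Real.dist_eq, abs_lt] at this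
    linarith [hB ⟨x, rfl⟩]
  refine ⟨B - 2, hclose.mono fun i hi x => ?_⟩
  have := hi x
  rw [Real.dist_eq, abs_lt] at this
  linarith [hφ x]

end UniformLimits

section NormalFlow

variable {α : Type*}

lemma exists_forall_abs_sub_self_le {s : ℝ → α → ℝ} {f : α → ℝ}
    (hf : ∃ Cf : ℝ, ∀ x, |f x| ≤ Cf)
    (hs : ∃ C : ℝ, ∀ t ≥ (0:ℝ), ∀ x, |s t x - (t + f x)| ≤ C * exp (-2 * t)) :
    ∃ D, ∀ t ≥ (0:ℝ), ∀ x, |s t x - t| ≤ D := by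
  obtain ⟨Cf, hCf⟩ := hf
  obtain ⟨C, hC⟩ := hs
  refine ⟨max C 0 + Cf, fun t ht x => ?_⟩
  have hexp : exp (-2 * t) ≤ 1 := exp_le_one_iff.mpr (by linarith)
  have hrate : C * exp (-2 * t) ≤ max C 0 :=
    calc C * exp (-2 * t) ≤ max C 0 * exp (-2 * t) := by gcongr; exact le_max_left _ _
      _ ≤ max C 0 := mul_le_of_le_one_right (le_max_right _ _) hexp
  calc |s t x - t| = |(s t x - (t + f x)) + f x| := by ring_nf
    _ ≤ |s t x - (t + f x)| + |f x| := abs_add_le _ _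
    _ ≤ max C 0 + Cf := add_le_add ((hC t ht x).trans hrate) (hCf x)

variable {s : ℝ → α → ℝ} {D : ℝ}

lemma eventually_forall_le_of_abs_sub_self_le (hD : ∀ t ≥ (0:ℝ), ∀ x, |s t x - t| ≤ D) (M : ℝ) :
    ∀ᶠ t in atTop, ∀ x, M ≤ s t x := by
  filter_upwards [eventually_ge_atTop (max 0 (M + D))] with t ht x
  have := (abs_le.mp (hD t ((le_max_left _ _).trans ht) x)).1
  linarith [le_max_right 0 (M + D)]

lemma tendstoUniformly_const_of_abs_sub_le_mul_exp {u : ℝ → α → ℝ} {c : ℝ}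
    (h : ∃ C : ℝ, ∀ t ≥ (0:ℝ), ∀ x, |u t x - c| ≤ C * exp (-2 * t)) :
    TendstoUniformly u (fun _ => c) atTop := by
  obtain ⟨C, hC⟩ := h
  have hrate : Tendsto (fun t : ℝ => C * exp (-2 * t)) atTop (𝓝 0) := by
    simpa using (tendsto_exp_atBot.comp
      (tendsto_id.const_mul_atTop_of_neg (by norm_num : (-2 : ℝ) < 0))).const_mul C
  refine Metric.tendstoUniformly_iff.mpr fun ε hε => ?_
  filter_upwards [hrate.eventually_lt_const hε, eventually_ge_atTop 0] with t hlt ht x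
  rw [dist_comm, Real.dist_eq]
  exact (hC t ht x).trans_lt hlt

lemma tendstoUniformly_exp_neg_two_mul_mul (hD : ∀ t ≥ (0:ℝ), ∀ x, |s t x - t| ≤ D)
    {a : ℝ → α → ℝ} (ha : ∃ C : ℝ, ∀ t ≥ (0:ℝ), ∀ x, |a t x - exp (2 * s t x)| ≤ C) :
    TendstoUniformly (fun t x => exp (-2 * s t x) * a t x) (fun _ => 1) atTop := by
  obtain ⟨C, hC⟩ := ha
  refine tendstoUniformly_const_of_abs_sub_le_mul_exp ⟨C * exp (2 * D), fun t ht x => ?_⟩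
  have hs : t - D ≤ s t x := by linarith [(abs_le.mp (hD t ht x)).1]
  have hfactor :
      exp (-2 * s t x) * a t x - 1 = exp (-2 * s t x) * (a t x - exp (2 * s t x)) := by
    rw [mul_sub, ← exp_add, show -2 * s t x + 2 * s t x = 0 by ring, exp_zero]
  calc |exp (-2 * s t x) * a t x - 1|
      = exp (-2 * s t x) * |a t x - exp (2 * s t x)| := by
        rw [hfactor, abs_mul, abs_of_pos (exp_pos _)]
    _ ≤ exp (-2 * (t - D)) * C :=
        mul_le_mul (exp_le_exp.mpr (by linarith)) (hC t ht x) (abs_nonneg _) (exp_pos _).le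
    _ = C * exp (2 * D) * exp (-2 * t) := by rw [mul_comm, mul_assoc, ← exp_add]; ring_nf

end NormalFlow

section Lapse

variable {ι α : Type*} {l : Filter ι} {k : ℝ}

lemma bddBelow_range_exp_mul_mul_sub_one (hk : 0 ≤ k) {s w : α → ℝ} (hw : ∀ x, 0 < w x) {M : ℝ}
    (hs : ∀ x, s x ≤ M) : BddBelow (range fun x => exp (k * s x) * (w x - 1)) := by
  refine ⟨-exp (k * M), ?_⟩
  rintro _ ⟨x, rfl⟩
  have hexp : exp (k * s x) ≤ exp (k * M) := exp_le_exp.mpr (by nlinarith [hs x])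
  nlinarith [exp_pos (k * s x), hw x]

lemma eventually_forall_abs_inv_le_two (hk : 0 < k) {s w : ι → α → ℝ}
    (hs : ∀ M, ∀ᶠ i in l, ∀ x, M ≤ s i x)
    (hg : ∃ B, ∀ᶠ i in l, ∀ x, B ≤ exp (k * s i x) * (w i x - 1)) :
    ∀ᶠ i in l, ∀ x, |(w i x)⁻¹| ≤ 2 := by
  obtain ⟨B, hB⟩ := hg
  filter_upwards [hB, hs (2 * |B| / k)] with i hBi hsi x
  have hexp : -2 * B ≤ exp (k * s i x) := by
    linarith [add_one_le_exp (k * s i x), (div_le_iff₀' hk).mp (hsi x), neg_abs_le B]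
  have hw : 1 / 2 ≤ w i x := by
    have : 0 ≤ exp (k * s i x) * (w i x - 1 / 2) := by
      rw [show exp (k * s i x) * (w i x - 1 / 2)
        = exp (k * s i x) * (w i x - 1) + exp (k * s i x) / 2 by ring]
      linarith [hBi x]
    linarith [nonneg_of_mul_nonneg_right this (exp_pos _)]
  rw [abs_of_pos (inv_pos.mpr (by linarith))]
  calc (w i x)⁻¹ ≤ (1 / 2)⁻¹ := inv_anti₀ (by norm_num) hw
    _ = 2 := by norm_num

lemma tendsto_of_tendsto_exp_mul_mul_sub_one (hk : 0 < k) {s w : ι → ℝ} {L : ℝ}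
    (hs : Tendsto s l atTop) (hg : Tendsto (fun i => exp (k * s i) * (w i - 1)) l (𝓝 L)) :
    Tendsto w l (𝓝 1) := by
  have hdecay : Tendsto (fun i => exp (-(k * s i))) l (𝓝 0) :=
    tendsto_exp_neg_atTop_nhds_zero.comp (hs.const_mul_atTop hk)
  have hlim := tendsto_const_nhds (x := (1 : ℝ)).add (hdecay.mul hg)
  rw [zero_mul, add_zero] at hlim
  refine hlim.congr fun i => ?_
  rw [← mul_assoc, ← exp_add, neg_add_cancel, exp_zero]
  ring

end Lapse

theorem tendsto_integral_mul_of_tendstoUniformly {ι α : Type*} {l : Filter ι}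
    [l.IsCountablyGenerated] [MeasurableSpace α] {μ : Measure α} [IsFiniteMeasure μ]
    {q g : ι → α → ℝ} {φ : α → ℝ} {c K : ℝ}
    (hq : ∀ x, Tendsto (q · x) l (𝓝 c)) (hqK : ∀ᶠ i in l, ∀ x, |q i x| ≤ K)
    (hg : TendstoUniformly g φ l) (hφ : Integrable φ μ)
    (hmeas : ∀ᶠ i in l, AEStronglyMeasurable (fun x => q i x * g i x) μ) :
    Tendsto (fun i => ∫ x, q i x * g i x ∂μ) l (𝓝 (∫ x, c * φ x ∂μ)) := by
  refine tendsto_integral_filter_of_dominated_convergence (fun x => K * (|φ x| + 1)) hmeas ?_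
    ((hφ.abs.add (integrable_const 1)).const_mul K)
    (ae_of_all _ fun x => (hq x).mul (hg.tendsto_at x))
  filter_upwards [hqK, hg.eventually_forall_abs_lt_abs_add one_pos] with i hqi hgi
  refine ae_of_all _ fun x => ?_
  rw [Real.norm_eq_abs, abs_mul]
  exact mul_le_mul (hqi x) (hgi x).le (abs_nonneg _) ((abs_nonneg _).trans (hqi x))

/-- convergence of the static Brown–York mass integrand on the
normal-flow leaves.  The torus cross-section is an abstract finite measure
space `(T, dA_σ)`; the leaf `Σ_t` carries the height function `s = t + f(θ) +
O(e^{-2t})`, potential `V = e^s`, mean curvatures `H_t = 2 + O(e^{-2t})` and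
`H_+ = w^{-1}H_t`, area density `a = e^{2s}(1 + O(e^{-2s}))` relative to
`dA_σ`, and `e^{3s}(w-1) → w_∞` uniformly.  Then
`∫_{Σ_t} V(H_t - H_+)dA_{γ_t} → ∫_{T²} 2w_∞ dA_σ`. -/
theorem static_BY_mass_convergence
    {T : Type*} [MeasureSpace T] [IsFiniteMeasure (volume : Measure T)]
    (w H s a : ℝ → T → ℝ) (winf f : T → ℝ)
    (hw : ∀ t θ, 0 < w t θ)
    (hf : ∃ Cf : ℝ, ∀ θ, |f θ| ≤ Cf)
    (hs : ∃ C : ℝ, ∀ t ≥ (0:ℝ), ∀ θ, |s t θ - (t + f θ)| ≤ C * Real.exp (-2 * t))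
    (hH : ∃ C : ℝ, ∀ t ≥ (0:ℝ), ∀ θ, |H t θ - 2| ≤ C * Real.exp (-2 * t))
    (hwlim : TendstoUniformly
      (fun t θ => Real.exp (3 * s t θ) * (w t θ - 1)) winf atTop)
    (ha : ∃ C : ℝ, ∀ t ≥ (0:ℝ), ∀ θ, |a t θ - Real.exp (2 * s t θ)| ≤ C)
    (hwinf : Integrable winf)
    (hmeas : ∀ t, AEStronglyMeasurable
      (fun θ => Real.exp (s t θ) * (H t θ - (w t θ)⁻¹ * H t θ) * a t θ)
      (volume : Measure T)) :
    Tendsto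
      (fun t => ∫ θ, Real.exp (s t θ) * (H t θ - (w t θ)⁻¹ * H t θ) * a t θ)
      atTop (nhds (∫ θ, 2 * winf θ)) := by
  obtain ⟨D, hD⟩ := exists_forall_abs_sub_self_le hf hs
  have hs_top := eventually_forall_le_of_abs_sub_self_le hD
  have hH_lim := tendstoUniformly_const_of_abs_sub_le_mul_exp hH
  have hr_lim := tendstoUniformly_exp_neg_two_mul_mul hD ha
  have hg_bdd : ∀ᶠ t in atTop, BddBelow (range fun θ => exp (3 * s t θ) * (w t θ - 1)) :=
    (eventually_ge_atTop 0).mono fun t ht => bddBelow_range_exp_mul_mul_sub_one (M := t + D)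
      (by norm_num) (hw t) fun θ => by linarith [(abs_le.mp (hD t ht θ)).2]
  have hw_inv := eventually_forall_abs_inv_le_two (by norm_num) hs_top
    (hwlim.exists_eventually_forall_le hg_bdd)
  have hw_lim θ := tendsto_of_tendsto_exp_mul_mul_sub_one (by norm_num : (0:ℝ) < 3)
    (tendsto_atTop.mpr fun M => (hs_top M).mono fun t h => h θ) (hwlim.tendsto_at θ)
  have hq_lim : ∀ θ, Tendsto (fun t => H t θ * (w t θ)⁻¹ * (exp (-2 * s t θ) * a t θ))
      atTop (𝓝 2) := fun θ => by
    simpa only [inv_one, mul_one] using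
      ((hH_lim.tendsto_at θ).mul ((hw_lim θ).inv₀ one_ne_zero)).mul (hr_lim.tendsto_at θ)
  have hq_bound : ∀ᶠ t in atTop, ∀ θ,
      |H t θ * (w t θ)⁻¹ * (exp (-2 * s t θ) * a t θ)| ≤ 3 * 2 * 2 := by
    filter_upwards [hH_lim.eventually_forall_abs_lt_abs_add one_pos, hw_inv,
      hr_lim.eventually_forall_abs_lt_abs_add one_pos] with t hHt hwt hrt θ
    rw [abs_mul, abs_mul]
    gcongr
    exacts [by linarith [hHt θ, abs_two (α := ℝ)], hwt θ, by linarith [hrt θ, abs_one (α := ℝ)]]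
  have hfactor t θ :=
    exp_mul_sub_inv_mul_mul_eq (s := s t θ) (H := H t θ) (a := a t θ) (hw t θ).ne'
  simp only [hfactor] at hmeas ⊢
  exact tendsto_integral_mul_of_tendstoUniformly hq_lim hq_bound hwlim hwinf (.of_forall hmeas)
end
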